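/- Let φ₀ ∈ (0,1], α₀ = arctan(1/√(3(3−2φ₀))), β₀ = (1/2)(π/2 − α₀), and μ₀ ≥ 0. Define f(λ) for λ > 0 by f(λ) = (1/(2√(2πλ)))·[ e^{−λ/2}(1 − erf((√λ tan β₀ − μ₀)/√2)) + e^{−(√λ − μ₀ cos α₀)²/2}(1 − erf((√λ tan β₀ + μ₀ sin α₀)/√2)) + e^{−(√λ + μ₀ cos α₀)²/2}(1 − erf((√λ tan α₀ + μ₀ sin α₀)/√2)) ]. Then f is a probability density function on (0, ∞), i.e., f ≥ 0 and ∫₀^∞ f(λ) dλ = 1. -/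

import Mathlib

open MeasureTheory Real

noncomputable def erf (t : ℝ) : ℝ :=
  (2 / Real.sqrt Real.pi) * ∫ s in (0:ℝ)..t, Real.exp (-s ^ 2)

/-- The approximating density for the likelihood ratio statistic of model T3. -/
noncomputable def fT3 (α₀ β₀ μ₀ l : ℝ) : ℝ :=
  (1 / (2 * Real.sqrt (2 * Real.pi * l))) *
    (Real.exp (-l / 2) * (1 - erf ((Real.sqrt l * Real.tan β₀ - μ₀) / Real.sqrt 2))
      + Real.exp (-(Real.sqrt l - μ₀ * Real.cos α₀) ^ 2 / 2)
          * (1 - erf ((Real.sqrt l * Real.tan β₀ + μ₀ * Real.sin α₀) / Real.sqrt 2))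
      + Real.exp (-(Real.sqrt l + μ₀ * Real.cos α₀) ^ 2 / 2)
          * (1 - erf ((Real.sqrt l * Real.tan α₀ + μ₀ * Real.sin α₀) / Real.sqrt 2)))

/-!
With `1 - erf (u / √2) = √(2/π) ∫_u^∞ e^{-y²/2} dy` every bracket of `fT3` is nonnegative, and
the substitution `λ = x²` turns `∫ fT3` into `π⁻¹ ∫_0^∞` of three terms of the form
`e^{-(x-c)²/2} ∫_{px+q}^∞ e^{-y²/2} dy`. Each is the mass, for the planar Gaussian
`e^{-|z|²/2}`, of a region `{x > 0, y > px + q}` shifted by `c`, and an isometry carries it onto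
one of the three wedges into which the rays from `(μ₀, 0)` at angles `π/2 - α₀` and `π/2 + β₀`
cut the upper half-plane. These wedges have angles `π/2 - α₀`, `α₀ + β₀` and `π/2 - β₀`; the
middle one matches its region, of angle `π/2 - β₀`, exactly because `α₀ + 2β₀ = π/2`. The upper
half-plane has Gaussian mass `π`.
-/

open Set

lemma integrable_exp_neg_sq_div_two : Integrable fun y : ℝ => exp (-y ^ 2 / 2) := by
  simpa [neg_div, div_eq_inv_mul] using integrable_exp_neg_mul_sq (b := 1 / 2) (by norm_num)

lemma integral_exp_neg_sq_div_two : ∫ y : ℝ, exp (-y ^ 2 / 2) = √(2 * π) := by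
  simpa [neg_div, div_eq_inv_mul] using integral_gaussian (1 / 2)

lemma integral_Ioi_exp_neg_sq_div_two : ∫ y in Ioi 0, exp (-y ^ 2 / 2) = √(2 * π) / 2 := by
  simpa [neg_div, div_eq_inv_mul] using integral_gaussian_Ioi (1 / 2)

lemma one_sub_erf (t : ℝ) : 1 - erf t = 2 / √π * ∫ s in Ioi t, exp (-s ^ 2) := by
  have hint : Integrable fun s : ℝ => exp (-s ^ 2) := by
    simpa using integrable_exp_neg_mul_sq (b := 1) one_pos
  have hhalf : ∫ s in Ioi 0, exp (-s ^ 2) = √π / 2 := by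
    simpa using integral_gaussian_Ioi 1
  rw [erf, ← intervalIntegral.integral_Ioi_sub_Ioi' hint.integrableOn hint.integrableOn, hhalf]
  field_simp
  ring

lemma one_sub_erf_nonneg (t : ℝ) : 0 ≤ 1 - erf t := by
  rw [one_sub_erf]
  exact mul_nonneg (by positivity) (setIntegral_nonneg measurableSet_Ioi fun s _ => by positivity)

noncomputable def gaussianTail (u : ℝ) : ℝ := ∫ y in Ioi u, exp (-y ^ 2 / 2)

lemma gaussianTail_nonneg (u : ℝ) : 0 ≤ gaussianTail u :=
  setIntegral_nonneg measurableSet_Ioi fun _ _ => by positivity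

lemma gaussianTail_antitone : Antitone gaussianTail := fun _ _ huv =>
  setIntegral_mono_set integrable_exp_neg_sq_div_two.integrableOn
    (.of_forall fun _ => by positivity) (Ioi_subset_Ioi huv).eventuallyLE

lemma gaussianTail_le (u : ℝ) : gaussianTail u ≤ √(2 * π) :=
  integral_exp_neg_sq_div_two ▸
    setIntegral_le_integral integrable_exp_neg_sq_div_two (.of_forall fun _ => by positivity)

lemma one_sub_erf_div_sqrt_two (u : ℝ) : 1 - erf (u / √2) = √2 / √π * gaussianTail u := by
  have h2 : (0 : ℝ) < √2 := by positivity
  have hsub := integral_comp_mul_left_Ioi (fun s => exp (-s ^ 2)) u (inv_pos.2 h2)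
  have hsq : ∀ y : ℝ, exp (-((√2)⁻¹ * y) ^ 2) = exp (-y ^ 2 / 2) := fun y => by
    rw [mul_pow, inv_pow, sq_sqrt zero_le_two]; ring_nf
  simp only [hsq, smul_eq_mul, inv_inv] at hsub
  rw [one_sub_erf, gaussianTail, hsub, div_eq_inv_mul u]
  field_simp
  rw [sq_sqrt zero_le_two]

lemma integrable_mul_gaussianTail {F : ℝ → ℝ} (hF : Integrable F) (p q : ℝ) :
    Integrable fun x => F x * gaussianTail (p * x + q) :=
  hF.mul_bdd (gaussianTail_antitone.measurable.comp (by fun_prop)).aestronglyMeasurable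
    (.of_forall fun x => by
      rw [Real.norm_of_nonneg (gaussianTail_nonneg _)]; exact gaussianTail_le _)

lemma setIntegral_mul_gaussianTail {F : ℝ → ℝ} (hF : Integrable F) (p q : ℝ) :
    ∫ x in Ioi 0, F x * gaussianTail (p * x + q)
      = ∫ z in {z : ℝ × ℝ | 0 < z.1 ∧ p * z.1 + q < z.2}, F z.1 * exp (-z.2 ^ 2 / 2) := by
  have hS : MeasurableSet {z : ℝ × ℝ | 0 < z.1 ∧ p * z.1 + q < z.2} :=
    (measurableSet_lt measurable_const measurable_fst).inter
      (measurableSet_lt (by fun_prop) measurable_snd)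
  have hint : Integrable (fun z : ℝ × ℝ => F z.1 * exp (-z.2 ^ 2 / 2)) (volume.prod volume) :=
    hF.mul_prod integrable_exp_neg_sq_div_two
  rw [← integral_indicator hS, Measure.volume_eq_prod, integral_prod _ (hint.indicator hS),
    ← integral_indicator measurableSet_Ioi]
  congr 1 with x
  by_cases hx : 0 < x
  · rw [indicator_of_mem (mem_Ioi.2 hx), gaussianTail, ← integral_const_mul,
      ← integral_indicator measurableSet_Ioi]
    simp [indicator, hx]
  · simp [indicator, hx]

noncomputable def gauss2 (z : ℝ × ℝ) : ℝ := exp (-(z.1 ^ 2 + z.2 ^ 2) / 2)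

lemma gauss2_eq_mul (z : ℝ × ℝ) : gauss2 z = exp (-z.1 ^ 2 / 2) * exp (-z.2 ^ 2 / 2) := by
  rw [gauss2, ← exp_add]; ring_nf

lemma integrable_gauss2 : Integrable gauss2 := by
  simp_rw [funext gauss2_eq_mul, Measure.volume_eq_prod]
  exact integrable_exp_neg_sq_div_two.mul_prod integrable_exp_neg_sq_div_two

lemma setIntegral_gauss2_upperHalfPlane : ∫ z in {z : ℝ × ℝ | 0 < z.2}, gauss2 z = π := by
  have hset : {z : ℝ × ℝ | 0 < z.2} = univ ×ˢ Ioi 0 := by ext; simp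
  rw [hset, Measure.volume_eq_prod]
  simp_rw [gauss2_eq_mul]
  rw [setIntegral_prod_mul (fun x => exp (-x ^ 2 / 2)) (fun y => exp (-y ^ 2 / 2)),
    setIntegral_univ, integral_exp_neg_sq_div_two, integral_Ioi_exp_neg_sq_div_two,
    ← mul_div_assoc, mul_self_sqrt (by positivity)]
  ring

lemma setIntegral_preimage_linearMap_comp_sub {E F : Type*} [NormedAddCommGroup E]
    [NormedSpace ℝ E] [MeasurableSpace E] [BorelSpace E] [FiniteDimensional ℝ E]
    [NormedAddCommGroup F] [NormedSpace ℝ F] (μ : Measure E) [μ.IsAddHaarMeasure]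
    {f : E →ₗ[ℝ] E} (hf : |LinearMap.det f| = 1) (v : E) (g : E → F) (s : Set E) :
    ∫ x in (fun x => f (x - v)) ⁻¹' s, g (f (x - v)) ∂μ = ∫ x in s, g x ∂μ := by
  have hdet : LinearMap.det f ≠ 0 := fun h => by simp [h] at hf
  let e := (f.equivOfDetNeZero hdet).toContinuousLinearEquiv
  have hf_mp : MeasurePreserving f μ μ :=
    ⟨f.continuous_of_finiteDimensional.measurable, by
      rw [Measure.map_linearMap_addHaar_eq_smul_addHaar μ hdet, abs_inv, hf, inv_one,
        ENNReal.ofReal_one, one_smul]⟩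
  exact (hf_mp.comp (measurePreserving_sub_right μ v)).setIntegral_preimage_emb
    (e.toHomeomorph.measurableEmbedding.comp (measurableEmbedding_subRight v)) g s

noncomputable def matrixMap (a b c d : ℝ) : ℝ × ℝ →ₗ[ℝ] ℝ × ℝ :=
  Matrix.toLin (Module.Basis.finTwoProd ℝ) (Module.Basis.finTwoProd ℝ) !![a, b; c, d]

@[simp]
lemma matrixMap_apply (a b c d : ℝ) (z : ℝ × ℝ) :
    matrixMap a b c d z = (a * z.1 + b * z.2, c * z.1 + d * z.2) :=
  Matrix.toLin_finTwoProd_apply a b c d z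

section Orthogonal

variable {a b c d : ℝ}

lemma abs_det_matrixMap_of_orthogonal (hac : a ^ 2 + c ^ 2 = 1) (hbd : b ^ 2 + d ^ 2 = 1)
    (hab : a * b + c * d = 0) : |LinearMap.det (matrixMap a b c d)| = 1 := by
  rw [matrixMap, LinearMap.det_toLin, Matrix.det_fin_two_of,
    ← sq_eq_sq₀ (abs_nonneg _) zero_le_one, sq_abs]
  linear_combination (b ^ 2 + d ^ 2) * hac + hbd - hab * (a * b + c * d)

lemma gauss2_matrixMap_of_orthogonal (hac : a ^ 2 + c ^ 2 = 1) (hbd : b ^ 2 + d ^ 2 = 1)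
    (hab : a * b + c * d = 0) (z : ℝ × ℝ) : gauss2 (matrixMap a b c d z) = gauss2 z := by
  simp only [gauss2, matrixMap_apply]
  congr 1
  linear_combination (-(z.1 ^ 2) * hac - z.2 ^ 2 * hbd - 2 * z.1 * z.2 * hab) / 2

lemma setIntegral_gauss2_preimage_of_orthogonal (hac : a ^ 2 + c ^ 2 = 1)
    (hbd : b ^ 2 + d ^ 2 = 1) (hab : a * b + c * d = 0) (v : ℝ × ℝ) (W : Set (ℝ × ℝ)) :
    ∫ z in (fun z => matrixMap a b c d (z - v)) ⁻¹' W, gauss2 (z - v) = ∫ z in W, gauss2 z := by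
  simp_rw [← gauss2_matrixMap_of_orthogonal hac hbd hab (_ - v)]
  exact setIntegral_preimage_linearMap_comp_sub volume
    (abs_det_matrixMap_of_orthogonal hac hbd hab) v gauss2 W

end Orthogonal

lemma setIntegral_exp_mul_gaussianTail (c p q : ℝ) :
    ∫ x in Ioi 0, exp (-(x - c) ^ 2 / 2) * gaussianTail (p * x + q)
      = ∫ z in {z : ℝ × ℝ | 0 < z.1 ∧ p * z.1 + q < z.2}, gauss2 (z - (c, 0)) := by
  rw [setIntegral_mul_gaussianTail (integrable_exp_neg_sq_div_two.comp_sub_right c)]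
  simp [gauss2_eq_mul]

lemma volume_line_eq_zero (a b κ : ℝ) (hb : b ≠ 0) :
    volume {z : ℝ × ℝ | a * z.1 + b * z.2 = κ} = 0 := by
  rw [Measure.volume_eq_prod,
    Measure.measure_prod_null (measurableSet_eq_fun (by fun_prop) measurable_const)]
  refine .of_forall fun x => ?_
  have : Prod.mk x ⁻¹' {z : ℝ × ℝ | a * z.1 + b * z.2 = κ} = {(κ - a * x) / b} := by
    ext y
    simp only [mem_preimage, mem_ofPred_eq, mem_singleton_iff, eq_div_iff hb]
    constructor <;> intro h <;> linarith
  simp [this]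

lemma sin_pos_and_cos_pos {A : ℝ} (hA : A ∈ Ioo 0 (π / 2)) : 0 < sin A ∧ 0 < cos A :=
  ⟨sin_pos_of_pos_of_lt_pi hA.1 (by linarith [hA.2, pi_pos]),
    cos_pos_of_mem_Ioo ⟨by linarith [hA.1, pi_pos], hA.2⟩⟩

section Wedges

variable (μ A B : ℝ)

/- For `A, B ∈ (0, π/2)`, the rays from `(μ, 0)` in the directions `(sin A, cos A)` and
`(-sin B, cos B)` cut the upper half-plane into these three wedges, from right to left. -/

def wedgeRight : Set (ℝ × ℝ) := {z | 0 < z.2 ∧ z.2 * sin A < (z.1 - μ) * cos A}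

def wedgeMiddle : Set (ℝ × ℝ) :=
  {z | (z.1 - μ) * cos A < z.2 * sin A ∧ 0 < (z.1 - μ) * cos B + z.2 * sin B}

def wedgeLeft : Set (ℝ × ℝ) := {z | 0 < z.2 ∧ (z.1 - μ) * cos B + z.2 * sin B < 0}

lemma measurableSet_wedgeMiddle : MeasurableSet (wedgeMiddle μ A B) := by
  unfold wedgeMiddle; measurability

lemma measurableSet_wedgeLeft : MeasurableSet (wedgeLeft μ B) := by
  unfold wedgeLeft; measurability

variable {A B}

lemma wedges_union_ae_eq (hA : A ∈ Ioo 0 (π / 2)) (hB : B ∈ Ioo 0 (π / 2)) :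
    (wedgeRight μ A ∪ wedgeMiddle μ A B ∪ wedgeLeft μ B : Set (ℝ × ℝ)) =ᵐ[volume]
      {z : ℝ × ℝ | 0 < z.2} := by
  obtain ⟨hsA, hcA⟩ := sin_pos_and_cos_pos hA
  obtain ⟨hsB, hcB⟩ := sin_pos_and_cos_pos hB
  refine ae_eq_set.2 ⟨?_, ?_⟩
  · convert measure_empty (μ := volume)
    refine sdiff_eq_empty.2 ?_
    rintro z ((⟨hv, -⟩ | ⟨h1, h2⟩) | ⟨hv, -⟩)
    · exact hv
    · -- the two inequalities combine to `0 < z.2 * sin (A + B)`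
      show 0 < z.2
      nlinarith [mul_lt_mul_of_pos_right h1 hcB, mul_lt_mul_of_pos_right h2 hcA, mul_pos hsA hcB,
        mul_pos hsB hcA]
    · exact hv
  · refine measure_mono_null ?_ (measure_union_null
      (volume_line_eq_zero (cos A) (-sin A) (μ * cos A) (neg_ne_zero.2 hsA.ne'))
      (volume_line_eq_zero (cos B) (sin B) (μ * cos B) hsB.ne'))
    rintro z ⟨hv, hz⟩
    simp only [wedgeRight, wedgeMiddle, wedgeLeft, mem_union, mem_ofPred_eq, not_or, not_and,
      not_lt] at hv hz ⊢
    obtain ⟨⟨hR, hM⟩, hL⟩ := hz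
    rcases (hR hv).lt_or_eq with hA' | hA'
    · right; linarith [hM hA', hL hv]
    · left; linarith

lemma setIntegral_gauss2_wedges (hA : A ∈ Ioo 0 (π / 2)) (hB : B ∈ Ioo 0 (π / 2)) :
    (∫ z in wedgeRight μ A, gauss2 z) + (∫ z in wedgeMiddle μ A B, gauss2 z)
      + ∫ z in wedgeLeft μ B, gauss2 z = π := by
  obtain ⟨hsA, hcA⟩ := sin_pos_and_cos_pos hA
  obtain ⟨hsB, hcB⟩ := sin_pos_and_cos_pos hB
  have hRM : Disjoint (wedgeRight μ A) (wedgeMiddle μ A B) :=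
    disjoint_left.2 fun z hR hM => by linarith [hR.2, hM.1]
  have hRML : Disjoint (wedgeRight μ A ∪ wedgeMiddle μ A B) (wedgeLeft μ B) := by
    refine disjoint_left.2 fun z hRM hL => ?_
    rcases hRM with ⟨hv, hR⟩ | ⟨-, hM⟩
    · have : 0 < z.1 - μ := pos_of_mul_pos_left (by nlinarith [mul_pos hv hsA]) hcA.le
      nlinarith [hL.2, mul_pos this hcB, mul_pos hv hsB]
    · linarith [hL.2]
  rw [← setIntegral_union hRM (measurableSet_wedgeMiddle μ A B) integrable_gauss2.integrableOn
      integrable_gauss2.integrableOn,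
    ← setIntegral_union hRML (measurableSet_wedgeLeft μ B) integrable_gauss2.integrableOn
      integrable_gauss2.integrableOn,
    ← setIntegral_gauss2_upperHalfPlane]
  exact setIntegral_congr_set (wedges_union_ae_eq μ hA hB)

end Wedges

lemma tan_mul_add_lt_iff {B x q y : ℝ} (hB : 0 < cos B) :
    tan B * x + q < y ↔ sin B * x + q * cos B < y * cos B := by
  rw [tan_eq_sin_div_cos, div_mul_eq_mul_div, ← lt_sub_iff_add_lt, div_lt_iff₀ hB, sub_mul,
    lt_sub_iff_add_lt]

section Terms

variable (μ : ℝ) {A B : ℝ}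

lemma setIntegral_exp_mul_gaussianTail_eq_wedgeLeft (hB : B ∈ Ioo 0 (π / 2)) :
    ∫ x in Ioi 0, exp (-x ^ 2 / 2) * gaussianTail (tan B * x - μ)
      = ∫ z in wedgeLeft μ B, gauss2 z := by
  have hcB := (sin_pos_and_cos_pos hB).2
  have hS : {z : ℝ × ℝ | 0 < z.1 ∧ tan B * z.1 - μ < z.2}
      = (fun z => matrixMap 0 (-1) 1 0 (z - (0, 0))) ⁻¹' wedgeLeft μ B := by
    ext z
    simp only [wedgeLeft, mem_preimage, mem_ofPred_eq, matrixMap_apply, Prod.fst_sub,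
      Prod.snd_sub, sub_zero, sub_eq_add_neg (_ * z.1), tan_mul_add_lt_iff hcB]
    constructor <;> rintro ⟨h1, h2⟩ <;> exact ⟨by linarith, by linarith⟩
  have h := setIntegral_exp_mul_gaussianTail 0 (tan B) (-μ)
  simp only [sub_zero, ← sub_eq_add_neg] at h
  rw [h, hS,
    setIntegral_gauss2_preimage_of_orthogonal (by norm_num) (by norm_num) (by norm_num)]

lemma setIntegral_exp_mul_gaussianTail_eq_wedgeMiddle (hB : B ∈ Ioo 0 (π / 2))
    (hAB : A + 2 * B = π / 2) :
    ∫ x in Ioi 0, exp (-(x - μ * cos A) ^ 2 / 2) * gaussianTail (tan B * x + μ * sin A)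
      = ∫ z in wedgeMiddle μ A B, gauss2 z := by
  have hcB := (sin_pos_and_cos_pos hB).2
  have hpyth := sin_sq_add_cos_sq A
  have hsin : sin A * cos B + cos A * sin B = cos B := by
    rw [← sin_add, show A + B = π / 2 - B by linarith, sin_pi_div_two_sub]
  have hcos : cos A * cos B - sin A * sin B = sin B := by
    rw [← cos_add, show A + B = π / 2 - B by linarith, cos_pi_div_two_sub]
  have hS : {z : ℝ × ℝ | 0 < z.1 ∧ tan B * z.1 + μ * sin A < z.2}
      = (fun z => matrixMap (-cos A) (sin A) (sin A) (cos A) (z - (μ * cos A, 0))) ⁻¹'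
          wedgeMiddle μ A B := by
    ext z
    simp only [wedgeMiddle, mem_preimage, mem_ofPred_eq, matrixMap_apply, Prod.fst_sub,
      Prod.snd_sub, sub_zero, tan_mul_add_lt_iff hcB]
    have E1 : (sin A * (z.1 - μ * cos A) + cos A * z.2) * sin A
        - (-cos A * (z.1 - μ * cos A) + sin A * z.2 - μ) * cos A = z.1 := by
      linear_combination (z.1 - μ * cos A) * hpyth
    have E2 : (-cos A * (z.1 - μ * cos A) + sin A * z.2 - μ) * cos B
        + (sin A * (z.1 - μ * cos A) + cos A * z.2) * sin B
        = z.2 * cos B - (sin B * z.1 + μ * sin A * cos B) := by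
      linear_combination (z.2 + μ) * hsin + (μ * cos A - z.1) * hcos
    constructor <;> rintro ⟨h1, h2⟩ <;> constructor <;> linarith
  rw [setIntegral_exp_mul_gaussianTail, hS, setIntegral_gauss2_preimage_of_orthogonal
    (by linear_combination hpyth) (by linear_combination hpyth) (by ring)]

lemma setIntegral_exp_mul_gaussianTail_eq_wedgeRight (hA : A ∈ Ioo 0 (π / 2)) :
    ∫ x in Ioi 0, exp (-(x + μ * cos A) ^ 2 / 2) * gaussianTail (tan A * x + μ * sin A)
      = ∫ z in wedgeRight μ A, gauss2 z := by
  have hcA := (sin_pos_and_cos_pos hA).2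
  have hpyth := sin_sq_add_cos_sq A
  have hS : {z : ℝ × ℝ | 0 < z.1 ∧ tan A * z.1 + μ * sin A < z.2}
      = (fun z => matrixMap (cos A) (sin A) (-sin A) (cos A) (z - (-(μ * cos A), 0))) ⁻¹'
          wedgeRight μ A := by
    ext z
    simp only [wedgeRight, mem_preimage, mem_ofPred_eq, matrixMap_apply, Prod.fst_sub,
      Prod.snd_sub, sub_zero, sub_neg_eq_add, tan_mul_add_lt_iff hcA]
    have E1 : (cos A * (z.1 + μ * cos A) + sin A * z.2 - μ) * cos A
        - (-sin A * (z.1 + μ * cos A) + cos A * z.2) * sin A = z.1 := by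
      linear_combination (z.1 + μ * cos A) * hpyth
    constructor <;> rintro ⟨h1, h2⟩ <;> constructor <;> linarith
  have h := setIntegral_exp_mul_gaussianTail (-(μ * cos A)) (tan A) (μ * sin A)
  simp only [sub_neg_eq_add] at h
  rw [h, hS, setIntegral_gauss2_preimage_of_orthogonal
    (by linear_combination hpyth) (by linear_combination hpyth) (by ring)]

end Terms

lemma fT3_nonneg (A B μ l : ℝ) : 0 ≤ fT3 A B μ l := by
  rw [fT3]
  refine mul_nonneg (by positivity) (add_nonneg (add_nonneg ?_ ?_) ?_) <;>
    exact mul_nonneg (exp_pos _).le (one_sub_erf_nonneg _)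

noncomputable def sqDensity (A B μ x : ℝ) : ℝ :=
  exp (-x ^ 2 / 2) * gaussianTail (tan B * x - μ)
    + exp (-(x - μ * cos A) ^ 2 / 2) * gaussianTail (tan B * x + μ * sin A)
    + exp (-(x + μ * cos A) ^ 2 / 2) * gaussianTail (tan A * x + μ * sin A)

lemma two_mul_mul_fT3_sq (A B μ : ℝ) {x : ℝ} (hx : 0 < x) :
    2 * x * fT3 A B μ (x ^ 2) = sqDensity A B μ x / π := by
  have hπ : √π ^ 2 = π := sq_sqrt pi_pos.le
  rw [fT3, sqDensity, sqrt_sq hx.le, sqrt_mul (by positivity), sqrt_sq hx.le,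
    sqrt_mul zero_le_two, one_sub_erf_div_sqrt_two, one_sub_erf_div_sqrt_two,
    one_sub_erf_div_sqrt_two]
  field_simp
  rw [hπ]
  ring_nf

lemma integral_fT3_eq (A B μ : ℝ) :
    ∫ l in Ioi 0, fT3 A B μ l = (∫ x in Ioi 0, sqDensity A B μ x) / π := by
  rw [← integral_comp_rpow_Ioi _ two_ne_zero, ← integral_div]
  refine setIntegral_congr_fun measurableSet_Ioi fun x hx => ?_
  have hx2 : x ^ (2 : ℝ) = x ^ 2 := rpow_two x
  rw [← two_mul_mul_fT3_sq A B μ hx, hx2, smul_eq_mul]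
  norm_num

lemma integral_sqDensity (μ : ℝ) {A B : ℝ} (hA : A ∈ Ioo 0 (π / 2)) (hB : B ∈ Ioo 0 (π / 2))
    (hAB : A + 2 * B = π / 2) : ∫ x in Ioi 0, sqDensity A B μ x = π := by
  have hint : ∀ c p q : ℝ,
      IntegrableOn (fun x => exp (-(x - c) ^ 2 / 2) * gaussianTail (p * x + q)) (Ioi 0) :=
    fun c p q => (integrable_mul_gaussianTail
      (integrable_exp_neg_sq_div_two.comp_sub_right c) p q).integrableOn
  have h1 := hint 0 (tan B) (-μ)
  have h2 := hint (μ * cos A) (tan B) (μ * sin A)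
  have h3 := hint (-(μ * cos A)) (tan A) (μ * sin A)
  simp only [sub_zero, ← sub_eq_add_neg] at h1
  simp only [sub_neg_eq_add] at h3
  simp only [sqDensity]
  rw [integral_add ?_ h3, integral_add h1 h2,
    setIntegral_exp_mul_gaussianTail_eq_wedgeLeft μ hB,
    setIntegral_exp_mul_gaussianTail_eq_wedgeMiddle μ hB hAB,
    setIntegral_exp_mul_gaussianTail_eq_wedgeRight μ hA]
  · linarith [setIntegral_gauss2_wedges μ hA hB]
  · exact h1.add h2

theorem stmt_12_general (φ₀ μ₀ : ℝ) (hφ : φ₀ ∈ Set.Ioc (0:ℝ) 1) :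
    let α₀ := Real.arctan (1 / Real.sqrt (3 * (3 - 2 * φ₀)))
    let β₀ := (1 / 2) * (Real.pi / 2 - α₀)
    (∀ l : ℝ, 0 < l → 0 ≤ fT3 α₀ β₀ μ₀ l) ∧
    ∫ l in Set.Ioi (0:ℝ), fT3 α₀ β₀ μ₀ l = 1 := by
  intro α₀ β₀
  have hα₀ : α₀ ∈ Ioo 0 (π / 2) := by
    have : 0 < 3 * (3 - 2 * φ₀) := by linarith [hφ.2]
    exact ⟨arctan_pos.2 (by positivity), arctan_lt_pi_div_two _⟩
  have hαβ : α₀ + 2 * β₀ = π / 2 := by simp only [β₀]; ring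
  have hβ₀ : β₀ ∈ Ioo 0 (π / 2) := ⟨by linarith [hα₀.2], by linarith [hα₀.1, pi_pos]⟩
  refine ⟨fun l _ => fT3_nonneg α₀ β₀ μ₀ l, ?_⟩
  rw [integral_fT3_eq, integral_sqDensity μ₀ hα₀ hβ₀ hαβ, div_self pi_ne_zero]

theorem stmt_12 (φ₀ μ₀ : ℝ) (hφ : φ₀ ∈ Set.Ioc (0:ℝ) 1) (hμ : 0 ≤ μ₀) :
    let α₀ := Real.arctan (1 / Real.sqrt (3 * (3 - 2 * φ₀)))
    let β₀ := (1 / 2) * (Real.pi / 2 - α₀)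
    (∀ l : ℝ, 0 < l → 0 ≤ fT3 α₀ β₀ μ₀ l) ∧
    ∫ l in Set.Ioi (0:ℝ), fT3 α₀ β₀ μ₀ l = 1 :=
  stmt_12_general φ₀ μ₀ hφ
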